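/- arXiv:math/0504313 — 5 statements merged into one kernel-verified Lean document; each statement's English description precedes it below -/
import Mathlib

section
/- Let G be a group, X a Banach space that is the dual of a Banach space Y (X = Y*), and α : G → (X →L[ℂ] X) a group homomorphism into invertible operators such that each α(g) is the adjoint of a bounded operator on Y (i.e., weak*-continuous), with sup_g ‖α(g)‖ < ∞. If there exists a left-invariant mean μ on the bounded complex functions on G (a norm-one linear functional with μ(1) = 1 and μ(L_g f) = μ(f) for all g), then there exists a bounded linear idempotent P : X →L[ℂ] X with P ∘ P = P, ‖P‖ ≤ sup_g ‖α(g)‖, and range of P equal to the fixed-point set X^G = {x ∈ X : α(g)(x) = x for all g ∈ G}. -/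
/-- On a dual Banach space `X = Y*`, an amenable group of uniformly bounded
weak*-continuous operators admits a completely bounded projection onto its fixed points. -/
theorem stmt_4 {G Y : Type*} [Group G]
    [NormedAddCommGroup Y] [NormedSpace ℂ Y]
    (α : G → (Y →L[ℂ] ℂ) →L[ℂ] (Y →L[ℂ] ℂ))
    (hα : ∀ g h : G, α (g * h) = (α g).comp (α h))
    (hα1 : α 1 = ContinuousLinearMap.id ℂ (Y →L[ℂ] ℂ))
    (β : G → Y →L[ℂ] Y)
    (hβ : ∀ (g : G) (x : Y →L[ℂ] ℂ) (y : Y), α g x y = x (β g y))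
    (M : ℝ) (hM0 : 0 ≤ M) (hM : ∀ g : G, ‖α g‖ ≤ M)
    (μ : (G → ℂ) →ₗ[ℂ] ℂ)
    (hμbdd : ∀ (f : G → ℂ) (C : ℝ), 0 ≤ C → (∀ g, ‖f g‖ ≤ C) → ‖μ f‖ ≤ C)
    (hμ1 : μ (fun _ : G => (1 : ℂ)) = 1)
    (hμinv : ∀ (t : G) (f : G → ℂ), μ (fun g : G => f (t * g)) = μ f) :
    ∃ P : (Y →L[ℂ] ℂ) →L[ℂ] (Y →L[ℂ] ℂ),
      P.comp P = P ∧ ‖P‖ ≤ M ∧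
      Set.range ⇑P = {x : Y →L[ℂ] ℂ | ∀ g : G, α g x = x} := by
  classical
  have hbound : ∀ (x : Y →L[ℂ] ℂ) (y : Y), ‖μ (fun g => α g x y)‖ ≤ M * ‖x‖ * ‖y‖ := by
    intro x y
    apply hμbdd
    · positivity
    · intro g
      calc ‖α g x y‖ ≤ ‖α g x‖ * ‖y‖ := (α g x).le_opNorm y
        _ ≤ (‖α g‖ * ‖x‖) * ‖y‖ := by gcongr; exact (α g).le_opNorm x
        _ ≤ (M * ‖x‖) * ‖y‖ := by gcongr; exact hM g
        _ = M * ‖x‖ * ‖y‖ := by ring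
  let P1 : (Y →L[ℂ] ℂ) → (Y →L[ℂ] ℂ) := fun x =>
    LinearMap.mkContinuous
      { toFun := fun y => μ (fun g => α g x y)
        map_add' := by
          intro y z
          simp only [map_add]
          exact μ.map_add _ _
        map_smul' := by
          intro c y
          simp only [map_smul, RingHom.id_apply]
          exact μ.map_smul c _ }
      (M * ‖x‖) (fun y => hbound x y)
  have hP1apply : ∀ x y, P1 x y = μ (fun g => α g x y) := fun _ _ => rfl
  have hP1norm : ∀ x, ‖P1 x‖ ≤ M * ‖x‖ := fun x =>
    LinearMap.mkContinuous_norm_le _ (by positivity) _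
  let P0 : (Y →L[ℂ] ℂ) →ₗ[ℂ] (Y →L[ℂ] ℂ) :=
    { toFun := P1
      map_add' := by
        intro x z
        ext y
        simp only [ContinuousLinearMap.add_apply, hP1apply, map_add,
          ContinuousLinearMap.add_apply]
        exact μ.map_add _ _
      map_smul' := by
        intro c x
        ext y
        simp only [hP1apply, map_smul, RingHom.id_apply,
          ContinuousLinearMap.smul_apply, ContinuousLinearMap.coe_smul']
        exact μ.map_smul c _ }
  let P : (Y →L[ℂ] ℂ) →L[ℂ] (Y →L[ℂ] ℂ) := LinearMap.mkContinuous P0 M hP1norm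
  have hPapply : ∀ x y, P x y = μ (fun g => α g x y) := fun _ _ => rfl
  -- P x is a fixed point
  have hfix : ∀ (x : Y →L[ℂ] ℂ) (t : G), α t (P x) = P x := by
    intro x t
    ext y
    have h1 : α t (P x) y = (P x) (β t y) := hβ t (P x) y
    rw [h1, hPapply, hPapply]
    have h2 : (fun g => α g x (β t y)) = fun g => α (t * g) x y := by
      funext g
      rw [hα t g]
      exact (hβ t (α g x) y).symm
    rw [h2]
    exact hμinv t (fun g => α g x y)
  -- P fixes fixed points
  have hid : ∀ x : Y →L[ℂ] ℂ, (∀ g, α g x = x) → P x = x := by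
    intro x hx
    ext y
    rw [hPapply]
    have : (fun g : G => α g x y) = fun _ : G => x y := by
      funext g; rw [hx g]
    rw [this]
    have : (fun _ : G => x y) = (x y) • (fun _ : G => (1 : ℂ)) := by
      funext g; simp
    rw [this, μ.map_smul, hμ1, smul_eq_mul, mul_one]
  refine ⟨P, ?_, ?_, ?_⟩
  · ext x : 1
    rw [ContinuousLinearMap.comp_apply]
    exact hid (P x) (hfix x)
  · exact LinearMap.mkContinuous_norm_le _ hM0 _
  · ext x
    constructor
    · rintro ⟨z, rfl⟩
      exact hfix z
    · intro hx
      exact ⟨x, hid x hx⟩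
end

section
/- Let ℋ be a complex Hilbert space and let S be an amenable (discrete) semigroup admitting an invariant mean μ on ℓ^∞(S). Let ρ : S → B(ℋ) be a map with ρ(st) = ρ(s)ρ(t) and ‖ρ(s)‖ ≤ 1 for all s, t ∈ S. Define the space of ρ-Toeplitz operators 𝒯(ρ) = {C ∈ B(ℋ) : ρ(s) C ρ(s)* = C for all s ∈ S}. Then there exists a bounded linear idempotent P : B(ℋ) → B(ℋ) with ‖P‖ ≤ 1, P ∘ P = P, and range of P equal to 𝒯(ρ). -/
/-!
`P A` is the mean, in the weak operator topology, of the orbit `s ↦ ρ(s) A ρ(s)*`: the bounded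
sesquilinear form `(η, ξ) ↦ μ (s ↦ ⟪η, ρ(s) A ρ(s)* ξ⟫)` is represented by an operator. Since
`ρ(t) ρ(s) A ρ(s)* ρ(t)* = ρ(ts) A ρ(ts)*`, left invariance of `μ` makes `P A` Toeplitz; `μ 1 = 1`
makes `P` fix every Toeplitz operator, whose orbit is constant; and `‖μ‖ ≤ 1`, `‖ρ(s)‖ ≤ 1`
give `‖P‖ ≤ 1`.
-/

open scoped InnerProductSpace ENNReal
open ContinuousLinearMap

theorem norm_inner_apply_le {𝕜 E F : Type*} [RCLike 𝕜] [NormedAddCommGroup E]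
    [InnerProductSpace 𝕜 E] [NormedAddCommGroup F] [InnerProductSpace 𝕜 F]
    (η : F) (T : E →L[𝕜] F) (ξ : E) : ‖⟪η, T ξ⟫_𝕜‖ ≤ ‖T‖ * ‖η‖ * ‖ξ‖ :=
  calc ‖⟪η, T ξ⟫_𝕜‖ ≤ ‖η‖ * ‖T ξ‖ := norm_inner_le_norm _ _
    _ ≤ ‖η‖ * (‖T‖ * ‖ξ‖) := by gcongr; exact T.le_opNorm ξ
    _ = ‖T‖ * ‖η‖ * ‖ξ‖ := by ring

section Bilin

variable {𝕜 E : Type*} [RCLike 𝕜] [NormedAddCommGroup E] [InnerProductSpace 𝕜 E] [CompleteSpace E]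

theorem inner_adjoint_continuousLinearMapOfBilin (B : E →L⋆[𝕜] E →L[𝕜] 𝕜) (η ξ : E) :
    ⟪η, adjoint (InnerProductSpace.continuousLinearMapOfBilin B) ξ⟫_𝕜 = B η ξ := by
  rw [adjoint_inner_right, InnerProductSpace.continuousLinearMapOfBilin_apply]

theorem norm_continuousLinearMapOfBilin (B : E →L⋆[𝕜] E →L[𝕜] 𝕜) :
    ‖InnerProductSpace.continuousLinearMapOfBilin B‖ = ‖B‖ :=
  (InnerProductSpace.toDual 𝕜 E).symm.toLinearIsometry.norm_toContinuousLinearMap_comp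

end Bilin

section ToeplitzProjection

variable {S H : Type*} [NormedAddCommGroup H] [InnerProductSpace ℂ H] [CompleteSpace H]

section WeakMean

variable (μ : (S → ℂ) →ₗ[ℂ] ℂ)
  (hμbdd : ∀ (f : S → ℂ) (C : ℝ), 0 ≤ C → (∀ s, ‖f s‖ ≤ C) → ‖μ f‖ ≤ C)

noncomputable def weakMeanForm (F : lp (fun _ : S => H →L[ℂ] H) ∞) :
    H →L⋆[ℂ] H →L[ℂ] ℂ :=
  LinearMap.mkContinuous₂
    (LinearMap.mk₂'ₛₗ (starRingEnd ℂ) (RingHom.id ℂ) (fun η ξ => μ fun s => ⟪η, F s ξ⟫_ℂ)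
      (fun η₁ η₂ ξ => by rw [← map_add]; congr 1; ext s; simp)
      (fun c η ξ => by rw [← map_smul]; congr 1; ext s; simp [mul_comm])
      (fun η ξ₁ ξ₂ => by rw [← map_add]; congr 1; ext s; simp)
      (fun c η ξ => by rw [← map_smul]; congr 1; ext s; simp))
    ‖F‖ fun η ξ => hμbdd _ _ (by positivity) fun s =>
      (norm_inner_apply_le η (F s) ξ).trans (by
        gcongr; exact lp.norm_apply_le_norm ENNReal.top_ne_zero F s)

theorem weakMeanForm_apply (F : lp (fun _ : S => H →L[ℂ] H) ∞) (η ξ : H) :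
    weakMeanForm μ hμbdd F η ξ = μ fun s => ⟪η, F s ξ⟫_ℂ := rfl

theorem norm_weakMeanForm_le (F : lp (fun _ : S => H →L[ℂ] H) ∞) :
    ‖weakMeanForm μ hμbdd F‖ ≤ ‖F‖ :=
  LinearMap.mkContinuous₂_norm_le _ (norm_nonneg F) _

noncomputable def weakMean : lp (fun _ : S => H →L[ℂ] H) ∞ →L[ℂ] H →L[ℂ] H :=
  LinearMap.mkContinuous
    { toFun F := adjoint (InnerProductSpace.continuousLinearMapOfBilin (weakMeanForm μ hμbdd F))
      map_add' F G := by
        ext ξ; refine ext_inner_left ℂ fun η => ?_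
        rw [add_apply, inner_add_right]
        simp only [inner_adjoint_continuousLinearMapOfBilin, weakMeanForm_apply]
        rw [← map_add]; congr 1; ext s; simp
      map_smul' c F := by
        ext ξ; refine ext_inner_left ℂ fun η => ?_
        rw [smul_apply, inner_smul_right]
        simp only [inner_adjoint_continuousLinearMapOfBilin, weakMeanForm_apply]
        rw [RingHom.id_apply, ← smul_eq_mul, ← map_smul]; congr 1; ext s; simp }
    1 fun F => by
      simpa [norm_continuousLinearMapOfBilin] using norm_weakMeanForm_le μ hμbdd F

theorem inner_weakMean_apply (F : lp (fun _ : S => H →L[ℂ] H) ∞) (η ξ : H) :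
    ⟪η, weakMean μ hμbdd F ξ⟫_ℂ = μ fun s => ⟪η, F s ξ⟫_ℂ :=
  inner_adjoint_continuousLinearMapOfBilin _ η ξ

theorem norm_weakMean_le : ‖weakMean (H := H) μ hμbdd‖ ≤ 1 :=
  LinearMap.mkContinuous_norm_le _ zero_le_one _

theorem weakMean_eq_of_forall_eq (hμ1 : μ (fun _ : S => (1 : ℂ)) = 1)
    (F : lp (fun _ : S => H →L[ℂ] H) ∞) (C : H →L[ℂ] H) (hF : ∀ s, F s = C) :
    weakMean μ hμbdd F = C := by
  ext ξ; refine ext_inner_left ℂ fun η => ?_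
  have hconst : (fun s => ⟪η, F s ξ⟫_ℂ) = ⟪η, C ξ⟫_ℂ • fun _ : S => (1 : ℂ) := by
    ext s; simp [hF]
  rw [inner_weakMean_apply, hconst, map_smul, hμ1, smul_eq_mul, mul_one]

theorem comp_weakMean_comp_eq [Mul S]
    (hμinv : ∀ (t : S) (f : S → ℂ), μ (fun s => f (t * s)) = μ f)
    {F : lp (fun _ : S => H →L[ℂ] H) ∞} {X Y : H →L[ℂ] H} (t : S)
    (hF : ∀ s, X ∘L F s ∘L Y = F (t * s)) :
    X ∘L weakMean μ hμbdd F ∘L Y = weakMean μ hμbdd F := by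
  ext ξ; refine ext_inner_left ℂ fun η => ?_
  have hshift : (fun s => ⟪adjoint X η, F s (Y ξ)⟫_ℂ) = fun s => ⟪η, F (t * s) ξ⟫_ℂ := by
    ext s; rw [adjoint_inner_left, ← hF]; rfl
  rw [comp_apply, comp_apply, ← adjoint_inner_left, inner_weakMean_apply, inner_weakMean_apply,
    hshift, hμinv t fun s => ⟪η, F s ξ⟫_ℂ]

end WeakMean

section Orbit

theorem norm_comp_comp_adjoint_le {R : H →L[ℂ] H} (hR : ‖R‖ ≤ 1) (A : H →L[ℂ] H) :
    ‖R ∘L A ∘L adjoint R‖ ≤ ‖A‖ :=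
  calc ‖R ∘L A ∘L adjoint R‖ ≤ ‖R‖ * (‖A‖ * ‖adjoint R‖) :=
        (opNorm_comp_le _ _).trans (by gcongr; exact opNorm_comp_le _ _)
    _ ≤ 1 * (‖A‖ * 1) := by gcongr; rwa [LinearIsometryEquiv.norm_map]
    _ = ‖A‖ := by ring

variable (ρ : S → H →L[ℂ] H) (hρ1 : ∀ s, ‖ρ s‖ ≤ 1)

noncomputable def conjOrbit : (H →L[ℂ] H) →L[ℂ] lp (fun _ : S => H →L[ℂ] H) ∞ :=
  LinearMap.mkContinuous
    { toFun A := ⟨fun s => ρ s ∘L A ∘L adjoint (ρ s), memℓp_infty ⟨‖A‖, by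
        rintro _ ⟨s, rfl⟩; exact norm_comp_comp_adjoint_le (hρ1 s) A⟩⟩
      map_add' A B := lp.ext <| funext fun s => by
        rw [lp.coeFn_add]; simp [add_comp, comp_add]
      map_smul' c A := lp.ext <| funext fun s => by simp [smul_comp] }
    1 fun A => by
      simpa using lp.norm_le_of_forall_le (norm_nonneg A) fun s =>
        norm_comp_comp_adjoint_le (hρ1 s) A

theorem conjOrbit_apply (A : H →L[ℂ] H) (s : S) :
    conjOrbit ρ hρ1 A s = ρ s ∘L A ∘L adjoint (ρ s) := rfl

theorem norm_conjOrbit_le : ‖conjOrbit ρ hρ1‖ ≤ 1 :=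
  LinearMap.mkContinuous_norm_le _ zero_le_one _

end Orbit

end ToeplitzProjection

open ContinuousLinearMap in
/-- Projection onto the space of `ρ`-Toeplitz operators, for a contractive
representation `ρ` of an amenable semigroup `S` on a Hilbert space. -/
theorem stmt_5 {S H : Type*} [Semigroup S]
    [NormedAddCommGroup H] [InnerProductSpace ℂ H] [CompleteSpace H]
    (μ : (S → ℂ) →ₗ[ℂ] ℂ)
    (hμbdd : ∀ (f : S → ℂ) (C : ℝ), 0 ≤ C → (∀ s, ‖f s‖ ≤ C) → ‖μ f‖ ≤ C)
    (hμ1 : μ (fun _ : S => (1 : ℂ)) = 1)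
    (hμinv : ∀ (t : S) (f : S → ℂ), μ (fun s : S => f (t * s)) = μ f)
    (ρ : S → H →L[ℂ] H)
    (hρ : ∀ s t : S, ρ (s * t) = (ρ s).comp (ρ t))
    (hρ1 : ∀ s : S, ‖ρ s‖ ≤ 1) :
    ∃ P : (H →L[ℂ] H) →L[ℂ] (H →L[ℂ] H),
      ‖P‖ ≤ 1 ∧ P.comp P = P ∧
      Set.range ⇑P =
        {C : H →L[ℂ] H | ∀ s : S, (ρ s).comp (C.comp (adjoint (ρ s))) = C} := by
  set P := (weakMean μ hμbdd).comp (conjOrbit ρ hρ1)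
  have hP_toeplitz (A : H →L[ℂ] H) (t : S) : ρ t ∘L P A ∘L adjoint (ρ t) = P A :=
    comp_weakMean_comp_eq μ hμbdd hμinv (F := conjOrbit ρ hρ1 A) t fun s => by
      simp only [conjOrbit_apply, hρ, adjoint_comp, comp_assoc]
  have hP_fix (C : H →L[ℂ] H) (hC : ∀ s, ρ s ∘L C ∘L adjoint (ρ s) = C) : P C = C :=
    weakMean_eq_of_forall_eq μ hμbdd hμ1 _ C hC
  refine ⟨P, ?_, ext fun A => hP_fix _ (hP_toeplitz A),
    Set.ext fun C => ⟨?_, fun hC => ⟨C, hP_fix C hC⟩⟩⟩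
  · exact (opNorm_comp_le _ _).trans
      (mul_le_one₀ (norm_weakMean_le μ hμbdd) (norm_nonneg _) (norm_conjOrbit_le ρ hρ1))
  · rintro ⟨A, rfl⟩
    exact hP_toeplitz A
end

section
/- There exists a Banach limit on ℓ^∞(ℕ, ℂ): a linear functional μ : ℓ^∞(ℕ, ℂ) → ℂ with ‖μ‖ = 1, μ(constant 1 sequence) = 1, and μ(f(· + 1)) = μ(f) for all bounded f : ℕ → ℂ. Consequently the additive semigroup ℕ is amenable. -/
/-!
A Banach limit is an ultrafilter limit of Cesàro means. Averaging makes the means of a bounded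
sequence and of its shift differ by `O(1/N)`, so any limit along a free ultrafilter cannot tell them
apart; and bounded sequences in a proper space converge along every ultrafilter, which makes the
ultrafilter limit a norm-one linear functional on `ℓ^∞`.
-/

open scoped ENNReal
open Filter Topology Finset

section CesaroMean

variable {𝕜 E : Type*} [RCLike 𝕜] [NormedAddCommGroup E] [NormedSpace 𝕜 E]

-- The `N`-th mean averages the first `N + 1` terms, so there is no junk value at `N = 0`.
variable (𝕜) in
noncomputable def cesaroMean (f : ℕ → E) (N : ℕ) : E :=
  ((N : 𝕜) + 1)⁻¹ • ∑ n ∈ range (N + 1), f n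

theorem norm_inv_natCast_add_one (N : ℕ) : ‖((N : 𝕜) + 1)⁻¹‖ = ((N : ℝ) + 1)⁻¹ := by
  rw [norm_inv, ← Nat.cast_succ, RCLike.norm_natCast, Nat.cast_succ]

theorem norm_cesaroMean_le {f : ℕ → E} {C : ℝ} (hf : ∀ n, ‖f n‖ ≤ C) (N : ℕ) :
    ‖cesaroMean 𝕜 f N‖ ≤ C := by
  calc ‖cesaroMean 𝕜 f N‖ ≤ ((N : ℝ) + 1)⁻¹ * ∑ n ∈ range (N + 1), ‖f n‖ := by
        rw [cesaroMean, norm_smul, norm_inv_natCast_add_one]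
        gcongr
        exact norm_sum_le _ _
    _ ≤ ((N : ℝ) + 1)⁻¹ * ((N + 1) * C) := by
        gcongr
        exact (sum_le_sum fun n _ => hf n).trans_eq (by simp)
    _ = C := by field_simp

theorem cesaroMean_shift_sub (f : ℕ → E) (N : ℕ) :
    cesaroMean 𝕜 (fun n => f (n + 1)) N - cesaroMean 𝕜 f N =
      ((N : 𝕜) + 1)⁻¹ • (f (N + 1) - f 0) := by
  rw [cesaroMean, cesaroMean, ← smul_sub]
  congr 1
  rw [sub_eq_sub_iff_add_eq_add, ← sum_range_succ', sum_range_succ, add_comm]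

theorem tendsto_cesaroMean_shift_sub {f : ℕ → E} {C : ℝ} (hf : ∀ n, ‖f n‖ ≤ C) :
    Tendsto (fun N => cesaroMean 𝕜 (fun n => f (n + 1)) N - cesaroMean 𝕜 f N) atTop (𝓝 0) := by
  refine squeeze_zero_norm (a := fun N : ℕ => 2 * C / ((N : ℝ) + 1)) (fun N => ?_) ?_
  · rw [cesaroMean_shift_sub, norm_smul, norm_inv_natCast_add_one, inv_mul_eq_div]
    gcongr
    linarith [norm_sub_le (f (N + 1)) (f 0), hf (N + 1), hf 0]
  · simpa [Function.comp_def] using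
      (tendsto_const_div_atTop_nhds_zero_nat (2 * C)).comp (tendsto_add_atTop_nat 1)

theorem cesaroMean_const {f : ℕ → E} {x : E} (hf : ∀ n, f n = x) (N : ℕ) :
    cesaroMean 𝕜 f N = x := by
  rw [cesaroMean, sum_congr rfl fun n _ => hf n, sum_const, card_range, ← Nat.cast_smul_eq_nsmul 𝕜,
    smul_smul, Nat.cast_succ, inv_mul_cancel₀ (Nat.cast_add_one_ne_zero N), one_smul]

theorem cesaroMean_add (f g : ℕ → E) :
    cesaroMean 𝕜 (f + g) = cesaroMean 𝕜 f + cesaroMean 𝕜 g := by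
  ext N
  simp only [cesaroMean, Pi.add_apply, sum_add_distrib, smul_add]

theorem cesaroMean_smul (c : 𝕜) (f : ℕ → E) : cesaroMean 𝕜 (c • f) = c • cesaroMean 𝕜 f := by
  ext N
  simp only [cesaroMean, Pi.smul_apply, ← smul_sum, smul_comm c]

end CesaroMean

namespace lp

section UltrafilterLimit

variable {ι 𝕜 E : Type*} [NontriviallyNormedField 𝕜] [NormedAddCommGroup E] [NormedSpace 𝕜 E]
  [ProperSpace E]

theorem tendsto_limUnder_ultrafilter (𝒰 : Ultrafilter ι) (f : lp (fun _ : ι => E) ∞) :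
    Tendsto f 𝒰 (𝓝 (limUnder 𝒰 f)) := by
  refine tendsto_nhds_limUnder ?_
  obtain ⟨a, -, ha⟩ := (isCompact_closedBall (0 : E) ‖f‖).ultrafilter_le_nhds (𝒰.map f) <|
    le_principal_iff.2 <| mem_map.2 <| univ_mem' fun i =>
      mem_closedBall_zero_iff.2 (norm_apply_le_norm ENNReal.top_ne_zero f i)
  exact ⟨a, ha⟩

variable (𝕜) in
noncomputable def ultrafilterLimit (𝒰 : Ultrafilter ι) : lp (fun _ : ι => E) ∞ →L[𝕜] E :=
  LinearMap.mkContinuous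
    { toFun := fun f => limUnder 𝒰 f
      map_add' := fun f g =>
        ((tendsto_limUnder_ultrafilter 𝒰 f).add (tendsto_limUnder_ultrafilter 𝒰 g)).limUnder_eq
      map_smul' := fun c f => ((tendsto_limUnder_ultrafilter 𝒰 f).const_smul c).limUnder_eq }
    1 fun f => by
      rw [one_mul]
      exact le_of_tendsto' (tendsto_limUnder_ultrafilter 𝒰 f).norm
        (norm_apply_le_norm ENNReal.top_ne_zero f)

theorem ultrafilterLimit_eq_of_tendsto {𝒰 : Ultrafilter ι} {f : lp (fun _ : ι => E) ∞} {x : E}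
    (hf : Tendsto f 𝒰 (𝓝 x)) : ultrafilterLimit 𝕜 𝒰 f = x :=
  hf.limUnder_eq

theorem norm_ultrafilterLimit_le (𝒰 : Ultrafilter ι) :
    ‖(ultrafilterLimit 𝕜 𝒰 : lp (fun _ : ι => E) ∞ →L[𝕜] E)‖ ≤ 1 :=
  LinearMap.mkContinuous_norm_le _ zero_le_one _

end UltrafilterLimit

section Cesaro

variable {𝕜 E : Type*} [RCLike 𝕜] [NormedAddCommGroup E] [NormedSpace 𝕜 E]

variable (𝕜) in
noncomputable def cesaro : lp (fun _ : ℕ => E) ∞ →L[𝕜] lp (fun _ : ℕ => E) ∞ :=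
  LinearMap.mkContinuous
    { toFun := fun f => ⟨cesaroMean 𝕜 f, memℓp_infty ⟨‖f‖, by
          rintro _ ⟨N, rfl⟩
          exact norm_cesaroMean_le (norm_apply_le_norm ENNReal.top_ne_zero f) N⟩⟩
      map_add' := fun f g => Subtype.ext <| cesaroMean_add (𝕜 := 𝕜) f g
      map_smul' := fun c f => Subtype.ext <| cesaroMean_smul c f }
    1 fun f => by
      rw [one_mul]
      exact norm_le_of_forall_le (norm_nonneg f)
        (norm_cesaroMean_le (norm_apply_le_norm ENNReal.top_ne_zero f))

theorem cesaro_apply (f : lp (fun _ : ℕ => E) ∞) (N : ℕ) : cesaro 𝕜 f N = cesaroMean 𝕜 f N :=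
  rfl

theorem norm_cesaro_le : ‖(cesaro 𝕜 : lp (fun _ : ℕ => E) ∞ →L[𝕜] lp (fun _ : ℕ => E) ∞)‖ ≤ 1 :=
  LinearMap.mkContinuous_norm_le _ zero_le_one _

end Cesaro

section BanachLimit

variable {𝕜 E : Type*} [RCLike 𝕜] [NormedAddCommGroup E] [NormedSpace 𝕜 E] [ProperSpace E]

variable (𝕜) in
noncomputable def banachLimit (𝒰 : Ultrafilter ℕ) : lp (fun _ : ℕ => E) ∞ →L[𝕜] E :=
  (ultrafilterLimit 𝕜 𝒰).comp (cesaro 𝕜)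

theorem norm_banachLimit_le (𝒰 : Ultrafilter ℕ) :
    ‖(banachLimit 𝕜 𝒰 : lp (fun _ : ℕ => E) ∞ →L[𝕜] E)‖ ≤ 1 :=
  (ContinuousLinearMap.opNorm_comp_le _ _).trans
    (mul_le_one₀ (norm_ultrafilterLimit_le 𝒰) (norm_nonneg _) norm_cesaro_le)

theorem banachLimit_const {𝒰 : Ultrafilter ℕ} {f : lp (fun _ : ℕ => E) ∞} {x : E}
    (hf : ∀ n, f n = x) : banachLimit 𝕜 𝒰 f = x :=
  ultrafilterLimit_eq_of_tendsto (𝕜 := 𝕜) <|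
    tendsto_const_nhds.congr fun N => (cesaroMean_const hf N).symm

theorem banachLimit_shift {𝒰 : Ultrafilter ℕ} (h𝒰 : (𝒰 : Filter ℕ) ≤ atTop)
    {f g : lp (fun _ : ℕ => E) ∞} (hg : ∀ n, g n = f (n + 1)) :
    banachLimit 𝕜 𝒰 g = banachLimit 𝕜 𝒰 f := by
  have hg' : (g : ℕ → E) = fun n => f (n + 1) := funext hg
  rw [← sub_eq_zero, ← map_sub, banachLimit, ContinuousLinearMap.comp_apply, map_sub]
  have hmeans := tendsto_cesaroMean_shift_sub (𝕜 := 𝕜) (norm_apply_le_norm ENNReal.top_ne_zero f)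
  refine ultrafilterLimit_eq_of_tendsto (𝕜 := 𝕜) <| (hmeans.mono_left h𝒰).congr fun N => ?_
  rw [coeFn_sub, Pi.sub_apply, cesaro_apply, cesaro_apply, hg']

end BanachLimit

end lp

/-- Existence of a Banach limit on `ℓ^∞(ℕ, ℂ)`: a norm-one, unital,
shift-invariant linear functional.  In particular `(ℕ, +)` is amenable. -/
theorem stmt_7 :
    ∃ μ : lp (fun _ : ℕ => ℂ) ∞ →L[ℂ] ℂ,
      ‖μ‖ = 1 ∧
      (∀ c : lp (fun _ : ℕ => ℂ) ∞, (∀ n : ℕ, c n = 1) → μ c = 1) ∧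
      (∀ f g : lp (fun _ : ℕ => ℂ) ∞, (∀ n : ℕ, g n = f (n + 1)) → μ g = μ f) := by
  let μ : lp (fun _ : ℕ => ℂ) ∞ →L[ℂ] ℂ := lp.banachLimit ℂ (Ultrafilter.of atTop)
  have hμ_one : μ 1 = 1 := lp.banachLimit_const fun n => by simp [lp.infty_coeFn_one]
  refine ⟨μ, le_antisymm (lp.norm_banachLimit_le _) ?_, fun c hc => lp.banachLimit_const hc,
    fun f g hg => lp.banachLimit_shift (Ultrafilter.of_le _) hg⟩
  simpa [hμ_one] using μ.le_opNorm 1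
end

section
/- Let G be a group, ℋ a Hilbert space, and ρ : G → GL(B(ℋ)) arising from a uniformly bounded representation π : G → B(ℋ)ˣ (invertible operators) with M := sup_g ‖π(g)‖ and sup_g ‖π(g)⁻¹‖ ≤ M. Suppose G admits a left-invariant mean on ℓ^∞(G). Then there exists a bounded idempotent linear map P : B(ℋ) → B(ℋ) with range equal to the commutant π(G)′ = {A ∈ B(ℋ) : A π(g) = π(g) A for all g ∈ G} and ‖P‖ ≤ M². -/
open scoped InnerProductSpace ComplexConjugate

/-!
Averaging the coefficient functions `g ↦ ⟪η, π g A (π g)⁻¹ ξ⟫` against the mean gives, for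
fixed `A` and `ξ`, a bounded linear functional of `η`, hence (Riesz) a vector `P A ξ`; the bounds
`‖π g‖, ‖π g⁻¹‖ ≤ M` make `A ↦ P A` an operator of norm at most `M²`. Left invariance of the mean
makes `P A` commute with every `π t`, and `P` fixes each operator that already commutes with `π(G)`,
since its coefficient functions are constant. So `P` is an idempotent onto the commutant.
-/

section WeakMean

variable {ι E F : Type*} [NormedAddCommGroup E] [InnerProductSpace ℂ E]
  [NormedAddCommGroup F] [InnerProductSpace ℂ F]

def HasWeakMean (μ : (ι → ℂ) →ₗ[ℂ] ℂ) (v : ι → E) (y : E) : Prop :=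
  ∀ η : E, ⟪η, y⟫_ℂ = μ (fun i => ⟪η, v i⟫_ℂ)

variable {μ : (ι → ℂ) →ₗ[ℂ] ℂ} {v w : ι → E} {y y' : E}

namespace HasWeakMean

theorem unique (h : HasWeakMean μ v y) (h' : HasWeakMean μ v y') : y = y' :=
  ext_inner_left ℂ fun η => (h η).trans (h' η).symm

theorem add (h : HasWeakMean μ v y) (h' : HasWeakMean μ w y') :
    HasWeakMean μ (fun i => v i + w i) (y + y') := fun η => by
  simp only [inner_add_right, h η, h' η, ← map_add]
  rfl

theorem smul (c : ℂ) (h : HasWeakMean μ v y) : HasWeakMean μ (fun i => c • v i) (c • y) :=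
    fun η => by
  simp only [inner_smul_right, h η, ← smul_eq_mul, ← map_smul]
  rfl

theorem map [CompleteSpace E] [CompleteSpace F] (T : E →L[ℂ] F) (h : HasWeakMean μ v y) :
    HasWeakMean μ (fun i => T (v i)) (T y) := fun η => by
  simp only [← ContinuousLinearMap.adjoint_inner_left, h _]

theorem comp_mul_left {G : Type*} [Group G] {μ : (G → ℂ) →ₗ[ℂ] ℂ} {v : G → E}
    (hμ : ∀ (t : G) (f : G → ℂ), μ (fun g => f (t * g)) = μ f) (h : HasWeakMean μ v y) (t : G) :
    HasWeakMean μ (fun g => v (t * g)) y :=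
  fun η => (h η).trans (hμ t _).symm

end HasWeakMean

theorem hasWeakMean_const (hμ : μ (fun _ => 1) = 1) (y : E) : HasWeakMean μ (fun _ => y) y :=
    fun η => by
  have hconst : (fun _ : ι => ⟪η, y⟫_ℂ) = ⟪η, y⟫_ℂ • fun _ => 1 := by ext; simp
  rw [hconst, map_smul, hμ, smul_eq_mul, mul_one]

theorem exists_hasWeakMean [CompleteSpace E]
    (hμ : ∀ (f : ι → ℂ) (C : ℝ), 0 ≤ C → (∀ i, ‖f i‖ ≤ C) → ‖μ f‖ ≤ C)
    {K : ℝ} (hK : 0 ≤ K) (hv : ∀ i, ‖v i‖ ≤ K) : ∃ y, ‖y‖ ≤ K ∧ HasWeakMean μ v y := by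
  -- Riesz representation applies to linear functionals, so conjugate the antilinear `η ↦ μ (…)`.
  let φ : E →ₗ[ℂ] ℂ :=
    { toFun := fun η => conj (μ (fun i => ⟪η, v i⟫_ℂ))
      map_add' := fun a b => by simp only [inner_add_left, ← map_add]; rfl
      map_smul' := fun c a => by
        have hsmul : (fun i => ⟪c • a, v i⟫_ℂ) = conj c • fun i => ⟪a, v i⟫_ℂ := by
          ext i; exact inner_smul_left _ _ _
        change conj (μ _) = c * conj (μ _)
        rw [hsmul, map_smul, smul_eq_mul, map_mul, Complex.conj_conj] }
  have hφ : ∀ η, ‖φ η‖ ≤ K * ‖η‖ := fun η => by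
    simpa [φ, mul_comm K] using hμ _ _ (by positivity) fun i =>
      (norm_inner_le_norm η (v i)).trans (by gcongr; exact hv i)
  refine ⟨(InnerProductSpace.toDual ℂ E).symm (φ.mkContinuous K hφ), ?_, fun η => ?_⟩
  · simpa using φ.mkContinuous_norm_le hK hφ
  · rw [← inner_conj_symm, InnerProductSpace.toDual_symm_apply]
    simp [φ]

theorem exists_forall_hasWeakMean_apply_apply [CompleteSpace E] {X : Type*}
    [NormedAddCommGroup X] [NormedSpace ℂ X]
    (hμ : ∀ (f : ι → ℂ) (C : ℝ), 0 ≤ C → (∀ i, ‖f i‖ ≤ C) → ‖μ f‖ ≤ C)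
    (Φ : ι → X →L[ℂ] E →L[ℂ] E) {C : ℝ} (hC : 0 ≤ C) (hΦ : ∀ i, ‖Φ i‖ ≤ C) :
    ∃ P : X →L[ℂ] E →L[ℂ] E, ‖P‖ ≤ C ∧ ∀ x ξ, HasWeakMean μ (fun i => Φ i x ξ) (P x ξ) := by
  have hbound : ∀ x ξ i, ‖Φ i x ξ‖ ≤ C * ‖x‖ * ‖ξ‖ := fun x ξ i =>
    ((Φ i).le_opNorm₂ x ξ).trans (by gcongr; exact hΦ i)
  choose p hp_norm hp using fun x ξ => exists_hasWeakMean hμ (by positivity) (hbound x ξ)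
  let P : X →ₗ[ℂ] E →ₗ[ℂ] E := LinearMap.mk₂ ℂ p
    (fun x x' ξ => (hp _ ξ).unique <| by simpa using (hp x ξ).add (hp x' ξ))
    (fun c x ξ => (hp _ ξ).unique <| by simpa using (hp x ξ).smul c)
    (fun x ξ ξ' => (hp x _).unique <| by simpa using (hp x ξ).add (hp x ξ'))
    (fun c x ξ => (hp x _).unique <| by simpa using (hp x ξ).smul c)
  exact ⟨P.mkContinuous₂ C hp_norm, P.mkContinuous₂_norm_le hC hp_norm, hp⟩

end WeakMean

section Commutant

variable {G H : Type*} [Group G] [NormedAddCommGroup H] [InnerProductSpace ℂ H] [CompleteSpace H]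

noncomputable def conjAction (π : G →* (H →L[ℂ] H)) (g : G) : (H →L[ℂ] H) →L[ℂ] (H →L[ℂ] H) :=
  ContinuousLinearMap.mulLeftRight ℂ (H →L[ℂ] H) (π g) (π g⁻¹)

variable (π : G →* (H →L[ℂ] H))

theorem conjAction_apply (g : G) (A : H →L[ℂ] H) : conjAction π g A = π g * A * π g⁻¹ :=
  ContinuousLinearMap.mulLeftRight_apply ..

theorem conjAction_mul_apply (s t : G) (A : H →L[ℂ] H) :
    conjAction π (s * t) A = conjAction π s (conjAction π t A) := by
  simp only [conjAction_apply, mul_inv_rev, map_mul, mul_assoc]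

theorem norm_conjAction_le (g : G) : ‖conjAction π g‖ ≤ ‖π g‖ * ‖π g⁻¹‖ :=
  ContinuousLinearMap.opNorm_mulLeftRight_apply_apply_le ..

theorem conjAction_eq_self_iff {g : G} {A : H →L[ℂ] H} :
    conjAction π g A = A ↔ A * π g = π g * A := by
  have hinv : π g⁻¹ = ↑(π.toHomUnits g)⁻¹ := by rw [← map_inv, MonoidHom.coe_toHomUnits]
  rw [conjAction_apply, hinv, Units.mul_inv_eq_iff_eq_mul, MonoidHom.coe_toHomUnits, eq_comm]

variable {π} {μ : (G → ℂ) →ₗ[ℂ] ℂ} {P : (H →L[ℂ] H) →L[ℂ] (H →L[ℂ] H)}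

theorem conjAction_apply_eq_of_hasWeakMean
    (hP : ∀ A ξ, HasWeakMean μ (fun g => conjAction π g A ξ) (P A ξ))
    (hμ : ∀ (t : G) (f : G → ℂ), μ (fun g => f (t * g)) = μ f) (A : H →L[ℂ] H) (t : G) :
    conjAction π t (P A) = P A := by
  ext ξ
  have hshift := (hP A ξ).comp_mul_left hμ t
  simp only [conjAction_mul_apply] at hshift
  exact ((hP A _).map (π t)).unique (by simpa [conjAction_apply] using hshift)

theorem apply_eq_self_of_hasWeakMean
    (hP : ∀ A ξ, HasWeakMean μ (fun g => conjAction π g A ξ) (P A ξ))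
    (hμ : μ (fun _ => 1) = 1) {A : H →L[ℂ] H} (hA : ∀ g, A * π g = π g * A) : P A = A := by
  ext ξ
  exact (hP A ξ).unique <| by
    simpa only [(conjAction_eq_self_iff π).2 (hA _)] using hasWeakMean_const hμ (A ξ)

end Commutant

theorem stmt_13_general {G H : Type*} [Group G]
    [NormedAddCommGroup H] [InnerProductSpace ℂ H] [CompleteSpace H]
    (π : G → H →L[ℂ] H)
    (hπ : ∀ g h : G, π (g * h) = (π g).comp (π h))
    (hπ1 : π 1 = 1)
    (M : ℝ)
    (hM : ∀ g : G, ‖π g‖ ≤ M) (hM' : ∀ g : G, ‖π g⁻¹‖ ≤ M)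
    (μ : (G → ℂ) →ₗ[ℂ] ℂ)
    (hμbdd : ∀ (f : G → ℂ) (C : ℝ), 0 ≤ C → (∀ g, ‖f g‖ ≤ C) → ‖μ f‖ ≤ C)
    (hμ1 : μ (fun _ : G => (1 : ℂ)) = 1)
    (hμinv : ∀ (t : G) (f : G → ℂ), μ (fun g : G => f (t * g)) = μ f) :
    ∃ P : (H →L[ℂ] H) →L[ℂ] (H →L[ℂ] H),
      P.comp P = P ∧ ‖P‖ ≤ M ^ 2 ∧
      Set.range ⇑P = {A : H →L[ℂ] H | ∀ g : G, A.comp (π g) = (π g).comp A} := by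
  let ρ : G →* (H →L[ℂ] H) := ⟨⟨π, hπ1⟩, hπ⟩
  have hconj_norm : ∀ g, ‖conjAction ρ g‖ ≤ M ^ 2 := fun g =>
    (norm_conjAction_le ρ g).trans <| by
      rw [sq]; exact mul_le_mul (hM g) (hM' g) (norm_nonneg _) ((norm_nonneg _).trans (hM g))
  obtain ⟨P, hP_norm, hP⟩ :=
    exists_forall_hasWeakMean_apply_apply hμbdd (conjAction ρ) (sq_nonneg M) hconj_norm
  have hrange : ∀ A g, P A * π g = π g * P A := fun A g =>
    (conjAction_eq_self_iff ρ).1 (conjAction_apply_eq_of_hasWeakMean hP hμinv A g)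
  have hfix : ∀ A, (∀ g, A * π g = π g * A) → P A = A := fun A =>
    apply_eq_self_of_hasWeakMean hP hμ1
  refine ⟨P, ContinuousLinearMap.ext fun A => hfix _ (hrange A), hP_norm, ?_⟩
  ext A
  exact ⟨by rintro ⟨B, rfl⟩; exact hrange B, fun hA => ⟨A, hfix A hA⟩⟩

/-- For a uniformly bounded representation `π` of an amenable group on a Hilbert
space there is a bounded idempotent of norm at most `M²` on `B(H)` whose range is
the commutant `π(G)'`. -/
theorem stmt_13 {G H : Type*} [Group G]
    [NormedAddCommGroup H] [InnerProductSpace ℂ H] [CompleteSpace H]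
    (π : G → H →L[ℂ] H)
    (hπ : ∀ g h : G, π (g * h) = (π g).comp (π h))
    (hπ1 : π 1 = 1)
    (M : ℝ) (hM0 : 0 ≤ M)
    (hM : ∀ g : G, ‖π g‖ ≤ M) (hM' : ∀ g : G, ‖π g⁻¹‖ ≤ M)
    (μ : (G → ℂ) →ₗ[ℂ] ℂ)
    (hμbdd : ∀ (f : G → ℂ) (C : ℝ), 0 ≤ C → (∀ g, ‖f g‖ ≤ C) → ‖μ f‖ ≤ C)
    (hμ1 : μ (fun _ : G => (1 : ℂ)) = 1)
    (hμinv : ∀ (t : G) (f : G → ℂ), μ (fun g : G => f (t * g)) = μ f) :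
    ∃ P : (H →L[ℂ] H) →L[ℂ] (H →L[ℂ] H),
      P.comp P = P ∧ ‖P‖ ≤ M ^ 2 ∧
      Set.range ⇑P = {A : H →L[ℂ] H | ∀ g : G, A.comp (π g) = (π g).comp A} :=
  stmt_13_general π hπ hπ1 M hM hM' μ hμbdd hμ1 hμinv
end

section
/- Let A be a unital Banach algebra, G a group, and ρ : G → Aˣ a group homomorphism into the units of A with M := sup_g max(‖ρ(g)‖, ‖ρ(g)⁻¹‖) < ∞. Suppose G admits a left-invariant mean on ℓ^∞(G) and A is a dual Banach space with separately weak*-continuous multiplication. Then the centralizer ρ(G)′ = {a ∈ A : a·ρ(g) = ρ(g)·a for all g ∈ G} is a complemented subspace of A: there exists a bounded idempotent P : A →L A with range ρ(G)′ and ‖P‖ ≤ M². -/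
/-!
Average the conjugation action against the invariant mean in the weak* sense:
`⟪P a, y⟫ = m (g ↦ ⟪ρ g * a * (ρ g)⁻¹, y⟫)`. Conjugation by `ρ g` has norm at most
`‖ρ g‖ * ‖(ρ g)⁻¹‖ ≤ M²`, and `P` fixes the centralizer because `m 1 = 1`. Conversely, conjugation
by `ρ t` is weak*-continuous, so by the weak representation theorem it commutes with the
weak*-average, where it becomes a left translation of the orbit, which `m` does not see.
-/

theorem WeakDual.exists_eq_eval {𝕜 Y : Type*} [NontriviallyNormedField 𝕜] [AddCommGroup Y]
    [TopologicalSpace Y] [Module 𝕜 Y] (f : WeakDual 𝕜 Y →L[𝕜] 𝕜) :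
    ∃ y : Y, ∀ φ : WeakDual 𝕜 Y, f φ = φ y := by
  obtain ⟨y, hy⟩ := LinearMap.dualEmbedding_surjective (topDualPairing 𝕜 Y) f
  exact ⟨y, fun φ => by rw [← hy]; rfl⟩

section WeakStar

variable {𝕜 G A Y : Type*} [NontriviallyNormedField 𝕜] [NormedAddCommGroup A] [NormedSpace 𝕜 A]
  [NormedAddCommGroup Y] [NormedSpace 𝕜 Y]

def IsWeakStarContinuous (e : A ≃ₗᵢ[𝕜] StrongDual 𝕜 Y) (Φ : A → A) : Prop :=
  Continuous fun φ : WeakDual 𝕜 Y => StrongDual.toWeakDual (e (Φ (e.symm φ.toStrongDual)))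

theorem IsWeakStarContinuous.comp {e : A ≃ₗᵢ[𝕜] StrongDual 𝕜 Y} {Φ Ψ : A → A}
    (hΦ : IsWeakStarContinuous e Φ) (hΨ : IsWeakStarContinuous e Ψ) :
    IsWeakStarContinuous e (Φ ∘ Ψ) := by
  simpa [IsWeakStarContinuous, Function.comp_def] using Continuous.comp hΦ hΨ

theorem IsWeakStarContinuous.map_mean {e : A ≃ₗᵢ[𝕜] StrongDual 𝕜 Y} {Φ : A →L[𝕜] A}
    (hΦ : IsWeakStarContinuous e Φ) (μ : (G → 𝕜) →ₗ[𝕜] 𝕜) (f : G → A) {ψ : StrongDual 𝕜 Y}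
    (hψ : ∀ y, ψ y = μ fun g => e (f g) y) (y : Y) :
    e (Φ (e.symm ψ)) y = μ fun g => e (Φ (f g)) y := by
  let F : WeakDual 𝕜 Y →L[𝕜] 𝕜 :=
    { toFun := fun φ => e (Φ (e.symm φ.toStrongDual)) y
      map_add' := fun φ χ => by simp
      map_smul' := fun c φ => by simp
      cont := (WeakDual.eval_continuous y).comp hΦ }
  have hF (φ : WeakDual 𝕜 Y) : F φ = e (Φ (e.symm φ.toStrongDual)) y := rfl
  obtain ⟨y₀, hy₀⟩ := WeakDual.exists_eq_eval F
  calc e (Φ (e.symm ψ)) y = ψ y₀ := hy₀ ψ.toWeakDual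
    _ = μ fun g => F (e (f g)).toWeakDual := by
      simp only [hψ, hy₀, StrongDual.toWeakDual_apply]
    _ = μ fun g => e (Φ (f g)) y := by
      simp only [hF, StrongDual.toStrongDual_toWeakDual, LinearIsometryEquiv.symm_apply_apply]

section OrbitMean

variable (e : A ≃ₗᵢ[𝕜] StrongDual 𝕜 Y) (T : G → A →L[𝕜] A) (μ : (G → 𝕜) →ₗ[𝕜] 𝕜)

noncomputable def orbitMean : A →ₗ[𝕜] Y →ₗ[𝕜] 𝕜 :=
  LinearMap.mk₂ 𝕜 (fun a y => μ fun g => e (T g a) y)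
    (fun a b y => by rw [← map_add]; congr 1; ext g; simp)
    (fun c a y => by rw [← map_smul]; congr 1; ext g; simp)
    (fun a y z => by rw [← map_add]; congr 1; ext g; simp)
    (fun c a y => by rw [← map_smul]; congr 1; ext g; simp)

@[simp]
theorem orbitMean_apply (a : A) (y : Y) : orbitMean e T μ a y = μ fun g => e (T g a) y := rfl

variable {e T μ}

theorem norm_orbitMean_apply_le {C : ℝ} (hC : 0 ≤ C) (hT : ∀ g, ‖T g‖ ≤ C)
    (hμ : ∀ (f : G → 𝕜) (C : ℝ), 0 ≤ C → (∀ g, ‖f g‖ ≤ C) → ‖μ f‖ ≤ C) (a : A) (y : Y) :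
    ‖orbitMean e T μ a y‖ ≤ C * ‖a‖ * ‖y‖ := by
  refine hμ _ _ (by positivity) fun g => ?_
  calc ‖e (T g a) y‖ ≤ ‖e (T g a)‖ * ‖y‖ := (e (T g a)).le_opNorm y
    _ = ‖T g a‖ * ‖y‖ := by rw [e.norm_map]
    _ ≤ C * ‖a‖ * ‖y‖ := by gcongr; exact (T g).le_of_opNorm_le (hT g) a

theorem orbitMean_apply_of_forall_apply_eq (hμ : μ (fun _ => 1) = 1) {a : A}
    (ha : ∀ g, T g a = a) (y : Y) : orbitMean e T μ a y = e a y := by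
  have hconst : (fun g => e (T g a) y) = e a y • fun _ => (1 : 𝕜) := by
    ext g; simp [ha]
  rw [orbitMean_apply, hconst, map_smul, hμ, smul_eq_mul, mul_one]

end OrbitMean

variable [Monoid G]

theorem apply_symm_eq_of_eq_orbitMean {e : A ≃ₗᵢ[𝕜] StrongDual 𝕜 Y} {T : G →* (A →L[𝕜] A)}
    (hT : ∀ g, IsWeakStarContinuous e (T g)) {μ : (G → 𝕜) →ₗ[𝕜] 𝕜}
    (hμ : ∀ (t : G) (f : G → 𝕜), μ (fun g => f (t * g)) = μ f) {a : A} {ψ : StrongDual 𝕜 Y}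
    (hψ : ∀ y, ψ y = orbitMean e T μ a y) (t : G) : T t (e.symm ψ) = e.symm ψ := by
  rw [← e.injective.eq_iff, e.apply_symm_apply]
  ext y
  calc e (T t (e.symm ψ)) y = μ fun g => e (T t (T g a)) y := (hT t).map_mean μ _ hψ y
    _ = μ fun g => e (T (t * g) a) y := by simp [map_mul]
    _ = ψ y := by rw [hμ t (fun g => e (T g a) y), hψ, orbitMean_apply]

theorem exists_projection_range_eq_fixedPoints (e : A ≃ₗᵢ[𝕜] StrongDual 𝕜 Y)
    (T : G →* (A →L[𝕜] A)) (hT : ∀ g, IsWeakStarContinuous e (T g)) {C : ℝ}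
    (hC : ∀ g, ‖T g‖ ≤ C) (μ : (G → 𝕜) →ₗ[𝕜] 𝕜)
    (hμ : ∀ (f : G → 𝕜) (C : ℝ), 0 ≤ C → (∀ g, ‖f g‖ ≤ C) → ‖μ f‖ ≤ C)
    (hμ1 : μ (fun _ => 1) = 1) (hμinv : ∀ (t : G) (f : G → 𝕜), μ (fun g => f (t * g)) = μ f) :
    ∃ P : A →L[𝕜] A, P.comp P = P ∧ ‖P‖ ≤ C ∧ Set.range P = {a | ∀ g, T g a = a} := by
  have hC0 : 0 ≤ C := (norm_nonneg _).trans (hC 1)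
  let B := (orbitMean e T μ).mkContinuous₂ C (norm_orbitMean_apply_le hC0 hC hμ)
  let P := e.symm.toLinearIsometry.toContinuousLinearMap.comp B
  have hP_fixed (a : A) (g : G) : T g (P a) = P a :=
    apply_symm_eq_of_eq_orbitMean hT hμinv (fun _ => rfl) g
  have hP_of_fixed {a : A} (ha : ∀ g, T g a = a) : P a = a := by
    change e.symm (B a) = a
    rw [e.symm_apply_eq]
    ext y
    exact orbitMean_apply_of_forall_apply_eq hμ1 ha y
  refine ⟨P, ?_, ?_, ?_⟩
  · ext a
    exact hP_of_fixed (hP_fixed a)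
  · exact (LinearIsometry.norm_toContinuousLinearMap_comp _).trans_le
      (LinearMap.mkContinuous₂_norm_le _ hC0 _)
  · ext a
    exact ⟨by rintro ⟨b, rfl⟩; exact hP_fixed b, fun ha => ⟨a, hP_of_fixed ha⟩⟩

end WeakStar

section Conjugation

variable {𝕜 A : Type*} [NontriviallyNormedField 𝕜] [NormedRing A] [NormedAlgebra 𝕜 A]

variable (𝕜) in
noncomputable def conjCLM : Aˣ →* (A →L[𝕜] A) where
  toFun u := ContinuousLinearMap.mulLeftRight 𝕜 A u ↑u⁻¹
  map_one' := by ext; simp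
  map_mul' u v := by ext; simp [mul_assoc]

@[simp]
theorem conjCLM_apply (u : Aˣ) (a : A) : conjCLM 𝕜 u a = u * a * ↑u⁻¹ := rfl

theorem norm_conjCLM_le (u : Aˣ) : ‖conjCLM 𝕜 u‖ ≤ ‖(u : A)‖ * ‖(↑u⁻¹ : A)‖ :=
  ContinuousLinearMap.opNorm_mulLeftRight_apply_apply_le 𝕜 A _ _

theorem conjCLM_apply_eq_self_iff (u : Aˣ) (a : A) : conjCLM 𝕜 u a = a ↔ a * u = u * a := by
  rw [conjCLM_apply, Units.mul_inv_eq_iff_eq_mul, eq_comm]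

theorem isWeakStarContinuous_conjCLM {Y : Type*} [NormedAddCommGroup Y] [NormedSpace 𝕜 Y]
    {e : A ≃ₗᵢ[𝕜] StrongDual 𝕜 Y} {u : Aˣ} (hl : IsWeakStarContinuous e (u * ·))
    (hr : IsWeakStarContinuous e (· * ↑u⁻¹)) : IsWeakStarContinuous e (conjCLM 𝕜 u) := by
  convert hl.comp hr using 1
  ext a
  simp [mul_assoc]

end Conjugation

theorem stmt_17_general {G A Y : Type*} [Group G]
    [NormedRing A] [NormedAlgebra ℂ A]
    [NormedAddCommGroup Y] [NormedSpace ℂ Y]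
    (e : A ≃ₗᵢ[ℂ] (Y →L[ℂ] ℂ))
    (hmulR : ∀ a : A, Continuous fun φ : WeakDual ℂ Y => (e (e.symm φ * a) : WeakDual ℂ Y))
    (hmulL : ∀ a : A, Continuous fun φ : WeakDual ℂ Y => (e (a * e.symm φ) : WeakDual ℂ Y))
    (ρ : G →* Aˣ)
    (M : ℝ)
    (hM : ∀ g : G, ‖((ρ g : Aˣ) : A)‖ ≤ M) (hM' : ∀ g : G, ‖(((ρ g)⁻¹ : Aˣ) : A)‖ ≤ M)
    (μ : (G → ℂ) →ₗ[ℂ] ℂ)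
    (hμbdd : ∀ (f : G → ℂ) (C : ℝ), 0 ≤ C → (∀ g, ‖f g‖ ≤ C) → ‖μ f‖ ≤ C)
    (hμ1 : μ (fun _ : G => (1 : ℂ)) = 1)
    (hμinv : ∀ (t : G) (f : G → ℂ), μ (fun g : G => f (t * g)) = μ f) :
    ∃ P : A →L[ℂ] A,
      P.comp P = P ∧ ‖P‖ ≤ M ^ 2 ∧
      Set.range ⇑P = {a : A | ∀ g : G, a * ((ρ g : Aˣ) : A) = ((ρ g : Aˣ) : A) * a} := by
  have hnorm (g : G) : ‖conjCLM ℂ (ρ g)‖ ≤ M ^ 2 :=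
    (norm_conjCLM_le _).trans <| by
      rw [sq]; exact mul_le_mul (hM g) (hM' g) (norm_nonneg _) ((norm_nonneg _).trans (hM g))
  -- `hmulL`, `hmulR` elaborate to continuity into the norm topology of `Y →L[ℂ] ℂ`.
  have hweak (g : G) : IsWeakStarContinuous e (conjCLM ℂ (ρ g)) :=
    isWeakStarContinuous_conjCLM (NormedSpace.Dual.toWeakDual_continuous.comp (hmulL _))
      (NormedSpace.Dual.toWeakDual_continuous.comp (hmulR _))
  obtain ⟨P, hPP, hPnorm, hPrange⟩ := exists_projection_range_eq_fixedPoints e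
    ((conjCLM ℂ).comp ρ) hweak hnorm μ hμbdd hμ1 hμinv
  refine ⟨P, hPP, hPnorm, hPrange.trans ?_⟩
  ext a
  simp only [MonoidHom.comp_apply, Set.mem_ofPred_eq, conjCLM_apply_eq_self_iff]

/-- In a unital dual Banach algebra with separately weak*-continuous multiplication,
the centralizer of a uniformly bounded representation of an amenable group is the
range of a bounded idempotent of norm at most `M²`. -/
theorem stmt_17 {G A Y : Type*} [Group G]
    [NormedRing A] [NormedAlgebra ℂ A] [CompleteSpace A]
    [NormedAddCommGroup Y] [NormedSpace ℂ Y]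
    (e : A ≃ₗᵢ[ℂ] (Y →L[ℂ] ℂ))
    (hmulR : ∀ a : A, Continuous fun φ : WeakDual ℂ Y => (e (e.symm φ * a) : WeakDual ℂ Y))
    (hmulL : ∀ a : A, Continuous fun φ : WeakDual ℂ Y => (e (a * e.symm φ) : WeakDual ℂ Y))
    (ρ : G →* Aˣ)
    (M : ℝ) (hM0 : 0 ≤ M)
    (hM : ∀ g : G, ‖((ρ g : Aˣ) : A)‖ ≤ M) (hM' : ∀ g : G, ‖(((ρ g)⁻¹ : Aˣ) : A)‖ ≤ M)
    (μ : (G → ℂ) →ₗ[ℂ] ℂ)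
    (hμbdd : ∀ (f : G → ℂ) (C : ℝ), 0 ≤ C → (∀ g, ‖f g‖ ≤ C) → ‖μ f‖ ≤ C)
    (hμ1 : μ (fun _ : G => (1 : ℂ)) = 1)
    (hμinv : ∀ (t : G) (f : G → ℂ), μ (fun g : G => f (t * g)) = μ f) :
    ∃ P : A →L[ℂ] A,
      P.comp P = P ∧ ‖P‖ ≤ M ^ 2 ∧
      Set.range ⇑P = {a : A | ∀ g : G, a * ((ρ g : Aˣ) : A) = ((ρ g : Aˣ) : A) * a} :=
  stmt_17_general e hmulR hmulL ρ M hM hM' μ hμbdd hμ1 hμinv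
end
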